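/- Every partitioned Herbrand assembly P is projective in the category HAsm with respect to regular epimorphisms: for every regular epimorphism p : B → A in HAsm and every morphism u : P → A, there exists a morphism v : P → B with p ∘ v = u. -/

import Mathlib

open CategoryTheory Encodable Denumerable

namespace Herbrand

/-- Kleene application in Kleene's first pca `K₁`: `e · n`. -/
def kap (e n : ℕ) : Part ℕ := Nat.Partrec.Code.eval (ofNat Nat.Partrec.Code e) n

/-- `kapIn r n S` : `r · n` is defined and its value lies in `S`. -/
def kapIn (r n : ℕ) (S : Set ℕ) : Prop := ∃ v ∈ kap r n, v ∈ S

/-- The list coded by a natural number (canonical bijection `ℕ ≃ List ℕ`). -/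
def toL (n : ℕ) : List ℕ := ofNat (List ℕ) n

/-- The code of a list of natural numbers. -/
def ofL (l : List ℕ) : ℕ := encode l

@[simp] lemma toL_ofL (l : List ℕ) : toL (ofL l) = l := ofNat_encode l

/-- `!A` : the set of codes of lists all of whose entries lie in `A`. -/
def bang (A : Set ℕ) : Set ℕ := {n | ∀ x ∈ toL n, x ∈ A}

/-- `m ⪯ n` : every entry of the list coded by `m` is an entry of the list coded by `n`. -/
def sle (m n : ℕ) : Prop := ∀ x ∈ toL m, x ∈ toL n

lemma sle_refl (m : ℕ) : sle m m := fun _ hx => hx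

lemma sle_trans {m n k : ℕ} (h1 : sle m n) (h2 : sle n k) : sle m k :=
  fun x hx => h2 x (h1 x hx)

/-- `S` is upward closed in `!A`. -/
def UpwardClosedIn (A S : Set ℕ) : Prop :=
  ∀ m ∈ S, ∀ n ∈ bang A, sle m n → n ∈ S

/-- `↑_{!A} S` : the set of `n ∈ !A` with `m ⪯ n` for some `m ∈ S`. -/
def upClo (A S : Set ℕ) : Set ℕ := {n | n ∈ bang A ∧ ∃ m ∈ S, sle m n}

lemma mem_bang_univ (n : ℕ) : n ∈ bang Set.univ := fun x _ => Set.mem_univ x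

/-- From a partial recursive function we get a `K₁`-code for it. -/
theorem exists_kap_eq {f : ℕ →. ℕ} (hf : Nat.Partrec f) : ∃ e, ∀ n, kap e n = f n := by
  obtain ⟨c, hc⟩ := Nat.Partrec.Code.exists_code.mp hf
  exact ⟨encode c, fun n => by simp [kap, hc]⟩


/-- A Herbrand assembly over `K₁`. -/
structure HAsmObj where
  carrier : Type
  real : Set ℕ
  rz : carrier → Set ℕ
  rz_sub : ∀ a, rz a ⊆ bang real
  rz_ne : ∀ a, (rz a).Nonempty
  rz_up : ∀ a, UpwardClosedIn real (rz a)

/-- `r ∈ ℕ` tracks the function `f` between the underlying sets of two Herbrand assemblies. -/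
def Tracks (B A : HAsmObj) (f : B.carrier → A.carrier) (r : ℕ) : Prop :=
  (∀ m ∈ bang B.real, kapIn r m (bang A.real)) ∧
  ∀ b : B.carrier, ∀ m ∈ B.rz b, kapIn r m (A.rz (f b))

/-- A morphism of Herbrand assemblies: a tracked function. -/
structure HHom (B A : HAsmObj) where
  toFun : B.carrier → A.carrier
  tracked : ∃ r, Tracks B A toFun r

theorem HHom.ext' {B A : HAsmObj} {f g : HHom B A} (h : f.toFun = g.toFun) : f = g := by
  cases f; cases g; simpa using h

theorem tracks_id_fun (B A : HAsmObj) (f : B.carrier → A.carrier)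
    (h1 : ∀ m ∈ bang B.real, m ∈ bang A.real)
    (h2 : ∀ b : B.carrier, ∀ m ∈ B.rz b, m ∈ A.rz (f b)) : ∃ r, Tracks B A f r := by
  obtain ⟨e, he⟩ := exists_kap_eq (Nat.Partrec.of_primrec Nat.Primrec.id)
  exact ⟨e, fun m hm => ⟨m, by simp [he], h1 m hm⟩,
    fun b m hm => ⟨m, by simp [he], h2 b m hm⟩⟩

theorem tracked_id (A : HAsmObj) : ∃ r, Tracks A A id r :=
  tracks_id_fun A A id (fun _ h => h) (fun _ _ h => h)

theorem tracked_comp {C B A : HAsmObj} {f : C.carrier → B.carrier} {g : B.carrier → A.carrier}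
    (hf : ∃ r, Tracks C B f r) (hg : ∃ s, Tracks B A g s) : ∃ t, Tracks C A (g ∘ f) t := by
  obtain ⟨r, hr1, hr2⟩ := hf
  obtain ⟨s, hs1, hs2⟩ := hg
  refine ⟨encode (Nat.Partrec.Code.comp (ofNat Nat.Partrec.Code s) (ofNat Nat.Partrec.Code r)),
    ?_, ?_⟩
  · intro m hm
    obtain ⟨v, hv, hv'⟩ := hr1 m hm
    obtain ⟨w, hw, hw'⟩ := hs1 v hv'
    exact ⟨w, by simp only [kap, Denumerable.ofNat_encode, Nat.Partrec.Code.eval]; exact Part.mem_bind hv hw, hw'⟩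
  · intro c m hm
    obtain ⟨v, hv, hv'⟩ := hr2 c m hm
    obtain ⟨w, hw, hw'⟩ := hs2 (f c) v hv'
    exact ⟨w, by simp only [kap, Denumerable.ofNat_encode, Nat.Partrec.Code.eval]; exact Part.mem_bind hv hw, hw'⟩

/-- The category `HAsm` of Herbrand assemblies over `K₁`. -/
instance : Category HAsmObj where
  Hom B A := HHom B A
  id A := ⟨id, tracked_id A⟩
  comp f g := ⟨g.toFun ∘ f.toFun, tracked_comp f.tracked g.tracked⟩
  id_comp f := HHom.ext' rfl
  comp_id f := HHom.ext' rfl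
  assoc f g h := HHom.ext' rfl


/-- The Herbrand assembly `∇X = (X, ℕ, x ↦ !ℕ)`. -/
def nablaObj (X : Type) : HAsmObj where
  carrier := X
  real := Set.univ
  rz _ := bang Set.univ
  rz_sub _ := fun _ h => h
  rz_ne _ := ⟨0, mem_bang_univ 0⟩
  rz_up _ := fun _ _ n hn _ => hn

/-- The functor `∇ : Set → HAsm`. -/
def Nabla : Type ⥤ HAsmObj where
  obj := nablaObj
  map f := ⟨f, tracks_id_fun _ _ f (fun _ h => h) (fun _ _ h => h)⟩
  map_id _ := HHom.ext' rfl
  map_comp _ _ := HHom.ext' rfl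

/-- The underlying-set functor `Γ : HAsm → Set`. -/
def Gamma : HAsmObj ⥤ Type where
  obj A := A.carrier
  map f := TypeCat.ofHom f.toFun

/-- The realizability structure of the natural numbers object: `ν n = ↑_{!ℕ} {⟨n⟩}`. -/
def nuN (n : ℕ) : Set ℕ := upClo Set.univ {ofL [n]}

/-- The natural numbers object `N = (ℕ, ℕ, ν)` of `HAsm`. -/
def NObj : HAsmObj where
  carrier := ℕ
  real := Set.univ
  rz := nuN
  rz_sub _ := fun _ hm => hm.1
  rz_ne n := ⟨ofL [n], mem_bang_univ _, ofL [n], rfl, sle_refl _⟩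
  rz_up _ := fun m hm k hk hmk => ⟨hk, hm.2.choose, hm.2.choose_spec.1,
    sle_trans hm.2.choose_spec.2 hmk⟩

/-- The terminal object `1 = ({*}, ℕ, * ↦ !ℕ)` of `HAsm`. -/
def oneObj : HAsmObj := nablaObj PUnit

/-- The zero morphism `0 : 1 ⟶ N`. -/
def zeroH : oneObj ⟶ NObj := by
  refine ⟨fun _ => (0 : ℕ), ?_⟩
  obtain ⟨e, he⟩ := exists_kap_eq (Nat.Partrec.of_primrec (Nat.Primrec.const (ofL [0])))
  exact ⟨e, fun m _ => ⟨ofL [0], by simp [he], mem_bang_univ _⟩,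
    fun b m _ => ⟨ofL [0], by simp [he], mem_bang_univ _, ofL [0], rfl, sle_refl _⟩⟩

/-- The successor morphism `s : N ⟶ N`. -/
def succH : NObj ⟶ NObj := by
  refine ⟨(Nat.succ : ℕ → ℕ), ?_⟩
  have hp : Primrec (fun m : ℕ => ofL ((toL m).map Nat.succ)) :=
    Primrec.encode.comp ((Primrec.ofNat (List ℕ)).list_map
      ((Primrec.succ.comp Primrec.snd).to₂))
  obtain ⟨e, he⟩ := exists_kap_eq (Nat.Partrec.of_primrec (Primrec.nat_iff.mp hp))
  refine ⟨e, fun m _ => ⟨ofL ((toL m).map Nat.succ), by simp [he], mem_bang_univ _⟩, ?_⟩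
  rintro (n : ℕ) m hm
  refine ⟨ofL ((toL m).map Nat.succ), by simp [he], mem_bang_univ _, ofL [n + 1], rfl, ?_⟩
  intro x hx
  have hn : n ∈ toL m := hm.2.choose_spec.2 n (by
    have : hm.2.choose = ofL [n] := hm.2.choose_spec.1
    rw [this]; simp)
  have hx' : x = n + 1 := by simpa using hx
  subst hx'
  simp only [toL_ofL, List.mem_map]
  exact ⟨n, hn, rfl⟩


/-- A partitioned Herbrand assembly. -/
def Partitioned (A : HAsmObj) : Prop :=
  ∀ a : A.carrier, ∃ g : ℕ, A.rz a = upClo A.real {ofL [g]}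

/-!
A regular epimorphism `p : B ⟶ A` is surjective, and the assembly with the points of `A` in which
`a` is realized by the realizers of the points of `B` over `a` receives a map from `B` that
coequalizes the same pair as `p`. It therefore factors through `p`, by a map that is the identity on
points: one code turns every realizer of `a` into a realizer of some point over `a`. Composed with
a tracker of `u`, this yields a code `t` sending the generator `⟨g_x⟩` of each `x : P` to a
realizer of some `b_x` over `u x`; put `v x := b_x`. An arbitrary realizer `m` of `x` is only known
to contain `g_x`, so `v` is tracked by the code that applies `t` to `⟨y⟩` for every entry `y` of
`m` and concatenates the results: the output contains `t · ⟨g_x⟩`, so by upward closure it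
realizes `b_x`.
-/

theorem kap_partrec (e : ℕ) : Partrec (kap e) :=
  Partrec.nat_iff.mpr (Nat.Partrec.Code.exists_code.mpr ⟨ofNat Nat.Partrec.Code e, rfl⟩)

theorem mem_upClo_singleton_iff {A : Set ℕ} {g n : ℕ} :
    n ∈ upClo A {ofL [g]} ↔ n ∈ bang A ∧ g ∈ toL n := by
  simp [upClo, sle]

theorem singleton_mem_bang {A : Set ℕ} {y : ℕ} (hy : y ∈ A) : ofL [y] ∈ bang A := by
  simpa [bang] using hy

def flatLift (V : ℕ → ℕ) (m : ℕ) : ℕ := ofL ((toL m).flatMap fun y => toL (V y))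

theorem flatLift_mem_bang {V : ℕ → ℕ} {m : ℕ} {S : Set ℕ} (h : ∀ y ∈ toL m, V y ∈ bang S) :
    flatLift V m ∈ bang S := by
  intro x hx
  simp only [flatLift, toL_ofL, List.mem_flatMap] at hx
  obtain ⟨y, hy, hx⟩ := hx
  exact h y hy x hx

theorem sle_flatLift {V : ℕ → ℕ} {m y : ℕ} (hy : y ∈ toL m) : sle (V y) (flatLift V m) :=
  fun x hx => by
    simp only [flatLift, toL_ofL, List.mem_flatMap]
    exact ⟨y, hy, hx⟩

-- The concatenation over the first `k` entries of `l`, written as a `Nat.rec` so that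
-- `Partrec.nat_rec` applies to it.
def flatMapPart (F : ℕ →. ℕ) (l : List ℕ) (k : ℕ) : Part (List ℕ) :=
  Nat.rec (Part.some []) (fun j IH => IH.bind fun acc => (F (l.getD j 0)).map (acc ++ toL ·)) k

theorem take_flatMap_mem_flatMapPart {F : ℕ →. ℕ} {V : ℕ → ℕ} {l : List ℕ}
    (hV : ∀ y ∈ l, V y ∈ F y) :
    ∀ k ≤ l.length, (l.take k).flatMap (fun y => toL (V y)) ∈ flatMapPart F l k := by
  intro k
  induction k with
  | zero => intro _; simp [flatMapPart]
  | succ k ih =>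
    intro hk
    have hget : l.getD k 0 = l[k] := List.getD_eq_getElem _ _ hk
    refine Part.mem_bind_iff.mpr ⟨_, ih (by omega), Part.mem_map_iff _ |>.mpr ⟨V l[k], ?_, ?_⟩⟩
    · rw [hget]; exact hV _ (List.getElem_mem hk)
    · rw [List.take_add_one, List.getElem?_eq_getElem hk, Option.toList_some,
        List.flatMap_append, List.flatMap_singleton]

theorem partrec_flatMapPart {F : ℕ →. ℕ} (hF : Partrec F) :
    Partrec fun l => flatMapPart F l l.length := by
  refine Partrec.nat_rec (α := List ℕ) (σ := List ℕ)
    (h := fun l q => (F (l.getD q.1 0)).map (q.2 ++ toL ·))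
    Computable.list_length (Partrec.const' _) ?_
  refine Partrec.map (hF.comp ?_) ?_
  · exact (Primrec.list_getD 0).to_comp.comp Computable.fst (Computable.fst.comp Computable.snd)
  · exact Computable.list_append.comp (Computable.snd.comp (Computable.snd.comp Computable.fst))
      ((Computable.ofNat (List ℕ)).comp Computable.snd)

theorem exists_kap_flatLift {F : ℕ →. ℕ} (hF : Partrec F) :
    ∃ e, ∀ (V : ℕ → ℕ) (m : ℕ), (∀ y ∈ toL m, V y ∈ F y) → flatLift V m ∈ kap e m := by
  obtain ⟨e, he⟩ := exists_kap_eq (f := fun m => (flatMapPart F (toL m) (toL m).length).map ofL)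
    (Partrec.nat_iff.mp (Partrec.map ((partrec_flatMapPart hF).comp (Computable.ofNat _))
      (Computable.encode.comp Computable.snd)))
  refine ⟨e, fun V m hV => ?_⟩
  rw [he]
  exact Part.mem_map _ (by simpa using take_flatMap_mem_flatMapPart hV _ le_rfl)

theorem generator_mem_real {P : HAsmObj} {x : P.carrier} {g : ℕ}
    (hg : P.rz x = upClo P.real {ofL [g]}) : g ∈ P.real := by
  obtain ⟨n, hn⟩ := P.rz_ne x
  rw [hg, mem_upClo_singleton_iff] at hn
  exact hn.1 g hn.2

theorem singleton_mem_rz {P : HAsmObj} {x : P.carrier} {g : ℕ}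
    (hg : P.rz x = upClo P.real {ofL [g]}) : ofL [g] ∈ P.rz x := by
  rw [hg, mem_upClo_singleton_iff]
  exact ⟨singleton_mem_bang (generator_mem_real hg), by simp⟩

theorem exists_tracks_of_generators {P B : HAsmObj} (v : P.carrier → B.carrier) (t : ℕ)
    (hdom : ∀ y ∈ P.real, kapIn t (ofL [y]) (bang B.real))
    (hgen : ∀ x, ∃ g, P.rz x = upClo P.real {ofL [g]} ∧ kapIn t (ofL [g]) (B.rz (v x))) :
    ∃ e, Tracks P B v e := by
  classical
  let V : ℕ → ℕ := fun y => if h : kapIn t (ofL [y]) (bang B.real) then h.choose else 0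
  have hV : ∀ y ∈ P.real, V y ∈ kap t (ofL [y]) ∧ V y ∈ bang B.real := fun y hy => by
    simp only [V, dif_pos (hdom y hy)]
    exact (hdom y hy).choose_spec
  have hsingleton : Partrec fun y => kap t (ofL [y]) :=
    (kap_partrec t).comp (Computable.encode.comp
      (Computable.list_cons.comp Computable.id (Computable.const [])))
  obtain ⟨e, he⟩ := exists_kap_flatLift hsingleton
  have hT : ∀ m ∈ bang P.real, flatLift V m ∈ kap e m ∧ flatLift V m ∈ bang B.real :=
    fun m hm => ⟨he V m fun y hy => (hV y (hm y hy)).1,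
      flatLift_mem_bang fun y hy => (hV y (hm y hy)).2⟩
  refine ⟨e, fun m hm => ⟨_, hT m hm⟩, fun x m hm => ?_⟩
  obtain ⟨g, hg, w, hw, hwb⟩ := hgen x
  have hmP := P.rz_sub x hm
  rw [hg, mem_upClo_singleton_iff] at hm
  obtain rfl : w = V g := Part.mem_unique hw (hV g (generator_mem_real hg)).1
  exact ⟨_, (hT m hmP).1, B.rz_up _ _ hwb _ (hT m hmP).2 (sle_flatLift hm.2)⟩

theorem surjective_of_epi {B A : HAsmObj} (p : B ⟶ A) [Epi p] :
    Function.Surjective (HHom.toFun p) := by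
  let inImage : A ⟶ nablaObj Prop := ⟨fun a => ∃ b, HHom.toFun p b = a,
    tracks_id_fun _ _ _ (fun m _ => mem_bang_univ m) (fun _ m _ => mem_bang_univ m)⟩
  let everywhere : A ⟶ nablaObj Prop := ⟨fun _ => True,
    tracks_id_fun _ _ _ (fun m _ => mem_bang_univ m) (fun _ m _ => mem_bang_univ m)⟩
  have h : inImage = everywhere := (cancel_epi p).mp (HHom.ext' (funext fun b => eq_true ⟨b, rfl⟩))
  exact fun a => of_eq_true (congrFun (congrArg HHom.toFun h) a)

def fiberImage {B A : HAsmObj} (p : B ⟶ A) (hp : Function.Surjective (HHom.toFun p)) :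
    HAsmObj where
  carrier := A.carrier
  real := B.real
  rz a := {n | ∃ b, HHom.toFun p b = a ∧ n ∈ B.rz b}
  rz_sub a := by
    rintro n ⟨b, -, hn⟩
    exact B.rz_sub b hn
  rz_ne a := by
    obtain ⟨b, hb⟩ := hp a
    obtain ⟨n, hn⟩ := B.rz_ne b
    exact ⟨n, b, hb, hn⟩
  rz_up a := by
    rintro m ⟨b, hb, hm⟩ n hn hmn
    exact ⟨b, hb, B.rz_up b m hm n hn hmn⟩

def toFiberImage {B A : HAsmObj} (p : B ⟶ A) (hp : Function.Surjective (HHom.toFun p)) :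
    B ⟶ fiberImage p hp :=
  ⟨@HHom.toFun B A p, tracks_id_fun _ _ _ (fun _ hm => hm) (fun b _ hm => ⟨b, rfl, hm⟩)⟩

theorem exists_tracks_id_fiberImage {B A : HAsmObj} (p : B ⟶ A) (hreg : RegularEpi p)
    (hp : Function.Surjective (HHom.toFun p)) : ∃ r, Tracks A (fiberImage p hp) id r := by
  have hw : hreg.left ≫ toFiberImage p hp = hreg.right ≫ toFiberImage p hp :=
    HHom.ext' (congrArg (@HHom.toFun _ A) hreg.w)
  let h := Limits.Cofork.IsColimit.desc hreg.isColimit _ hw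
  have hfac := Limits.Cofork.IsColimit.π_desc' hreg.isColimit _ hw
  have hid : HHom.toFun h = id := funext fun a => by
    obtain ⟨b, rfl⟩ := hp a
    exact congrFun (congrArg (@HHom.toFun B _) hfac) b
  exact hid ▸ h.tracked

/-- partitioned Herbrand assemblies are projective with respect to regular
epimorphisms in `HAsm`. -/
theorem partitioned_projective (P : HAsmObj) (hP : Partitioned P)
    {B A : HAsmObj} (p : B ⟶ A) (_ : RegularEpi p) (u : P ⟶ A) :
    ∃ v : P ⟶ B, v ≫ p = u := by
  rename_i hreg
  have := RegularEpi.epi p hreg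
  have hp := surjective_of_epi p
  obtain ⟨t, ht⟩ := tracked_comp u.tracked (exists_tracks_id_fiberImage p hreg hp)
  have hlift : ∀ x, ∃ b, HHom.toFun p b = HHom.toFun u x ∧
      ∃ g, P.rz x = upClo P.real {ofL [g]} ∧ kapIn t (ofL [g]) (B.rz b) := by
    intro x
    obtain ⟨g, hg⟩ := hP x
    obtain ⟨w, hw, b, hb, hwb⟩ := ht.2 x _ (singleton_mem_rz hg)
    exact ⟨b, hb, g, hg, w, hw, hwb⟩
  choose v hpv hv using hlift
  obtain ⟨e, he⟩ := exists_tracks_of_generators v t (fun y hy => ht.1 _ (singleton_mem_bang hy)) hv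
  exact ⟨⟨v, e, he⟩, HHom.ext' (funext hpv)⟩

end Herbrand
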